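/- Let 𝓗 ⊆ {0,1}^ℕ be a hypothesis class, k ∈ ℕ, and let w be a computable k-witness of VC dimension for 𝓗. Let 𝓗_good be the set of all good functions with respect to w. Then the class 𝓗 ∪ 𝓗_good has a computable ERM. -/

import Mathlib

/-!
Let `M` bound the points of the sample. Every `h ∈ H ∪ 𝓗_good` agrees on `[0, M]` with a
good hypothesis supported in `[0, M + 1]`: `h` itself if it is good with `max supp h ≤ M`, and
otherwise `h` cut off above `M` with an extra point at `M + 1`. That extra point makes
`max supp = M + 1`, so goodness only concerns tuples inside `[0, M]`, where `h` avoids `w` (by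
the witness property if `h ∈ H`, by goodness otherwise). Goodness of a finitely supported
hypothesis is decidable with the help of `w`, so a learner can enumerate the good hypotheses
supported in `[0, M + 1]` and return one with fewest mistakes on the sample; as it only returns
good hypotheses, it is an ERM for `H ∪ 𝓗_good`.
-/

open Filter
open scoped ENNReal

/-- A hypothesis is a function `ℕ → Bool` (i.e. an element of `{0,1}^ℕ`). -/
abbrev Hyp := ℕ → Bool

/-- A sample is a finite sequence of labeled examples. -/
abbrev Sample := List (ℕ × Bool)

/-- A learner maps samples to hypotheses. -/
abbrev Learner := Sample → Hyp

/-- Generalization error `L_D(h) = Pr_{(x,y)∼D}[h(x) ≠ y]`. -/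
noncomputable def genError (D : PMF (ℕ × Bool)) (h : Hyp) : ℝ≥0∞ :=
  D.toOuterMeasure {p | h p.1 ≠ p.2}

/-- The distribution of `m` i.i.d. draws from `D`, as a PMF on samples of size `m`. -/
noncomputable def iidPMF (D : PMF (ℕ × Bool)) : ℕ → PMF Sample
  | 0 => PMF.pure []
  | m + 1 => D.bind fun p => (iidPMF D m).map (List.cons p)

/-- `Pr_{S ∼ D^m}[S ∈ E]`. -/
noncomputable def samplePr (D : PMF (ℕ × Bool)) (m : ℕ) (E : Set Sample) : ℝ≥0∞ :=
  (iidPMF D m).toOuterMeasure E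

/-- The PAC inequality for accuracy/confidence parameter `n` and sample size `m`:
for every distribution `D`,
`Pr_{S∼D^m}[L_D(A(S)) ≤ inf_{h∈H} L_D(h) + 1/n] ≥ 1 − 1/n`. -/
def PACCondition (A : Learner) (H : Set Hyp) (n m : ℕ) : Prop :=
  ∀ D : PMF (ℕ × Bool),
    1 - ((n : ℝ≥0∞))⁻¹ ≤
      samplePr D m {S | genError D (A S) ≤ (⨅ h ∈ H, genError D h) + ((n : ℝ≥0∞))⁻¹}

/-- `A` PAC learns `H`. -/
def PACLearns (A : Learner) (H : Set Hyp) : Prop :=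
  ∀ n : ℕ, ∃ m₀ : ℕ, ∀ m ≥ m₀, PACCondition A H n m

/-- The sample complexity of `A` w.r.t. `H`: the minimal `m₀` such that the PAC
inequality for `n` holds for all `m ≥ m₀`. -/
noncomputable def sampleComplexity (A : Learner) (H : Set Hyp) (n : ℕ) : ℕ :=
  sInf {m₀ | ∀ m ≥ m₀, PACCondition A H n m}

/-- A learner is computable if the two-argument function `(S, x) ↦ A(S)(x)` is computable
(equivalently, there is an algorithm producing from `S` a Turing machine computing the
total function `A(S)`). -/
def ComputableLearner (A : Learner) : Prop :=
  Computable₂ fun (S : Sample) (x : ℕ) => A S x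

/-- A learner is proper for `H` if it only outputs hypotheses from `H`. -/
def ProperFor (A : Learner) (H : Set Hyp) : Prop := ∀ S, A S ∈ H

/-- `H` is CPAC learnable: some computable learner PAC learns it. -/
def CPACLearnable (H : Set Hyp) : Prop :=
  ∃ A : Learner, ComputableLearner A ∧ PACLearns A H

/-- `H` is properly CPAC learnable. -/
def ProperlyCPACLearnable (H : Set Hyp) : Prop :=
  ∃ A : Learner, ComputableLearner A ∧ ProperFor A H ∧ PACLearns A H

/-- `H` is SCPAC learnable: some computable learner PAC learns it with sample complexity
bounded by a total computable function. -/
def SCPACLearnable (H : Set Hyp) : Prop :=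
  ∃ A : Learner, ComputableLearner A ∧ PACLearns A H ∧
    ∃ g : ℕ → ℕ, Computable g ∧ ∀ n, sampleComplexity A H n ≤ g n

/-- `H` is properly SCPAC learnable. -/
def ProperlySCPACLearnable (H : Set Hyp) : Prop :=
  ∃ A : Learner, ComputableLearner A ∧ ProperFor A H ∧ PACLearns A H ∧
    ∃ g : ℕ → ℕ, Computable g ∧ ∀ n, sampleComplexity A H n ≤ g n

/-- Empirical error `L_S(h) = |{i : h(x_i) ≠ y_i}| / |S|`. -/
noncomputable def empError (S : Sample) (h : Hyp) : ℝ≥0∞ :=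
  ((S.countP fun p => h p.1 != p.2 : ℕ) : ℝ≥0∞) / (S.length : ℝ≥0∞)

/-- `A` is an ERM for `H`: on every sample it outputs a hypothesis of `H` minimizing
the empirical error over `H`. -/
def IsERM (A : Learner) (H : Set Hyp) : Prop :=
  ∀ S : Sample, A S ∈ H ∧ ∀ h ∈ H, empError S (A S) ≤ empError S h

/-- `A` is an asymptotic ERM for `H`. -/
def IsAsymptoticERM (A : Learner) (H : Set Hyp) : Prop :=
  ProperFor A H ∧
  ∃ ε : ℕ → ℝ≥0∞, (∀ m, ε m ≤ 1) ∧ Tendsto ε atTop (nhds 0) ∧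
    ∀ S : Sample, empError S (A S) ≤ (⨅ h ∈ H, empError S h) + ε S.length

/-- `H` shatters the finite set `s`. -/
def Shatters (H : Set Hyp) (s : Finset ℕ) : Prop :=
  ∀ g : ℕ → Bool, ∃ h ∈ H, ∀ x ∈ s, h x = g x

/-- The VC dimension of `H` is at most `d`. -/
def VCDimAtMost (H : Set Hyp) (d : ℕ) : Prop :=
  ∀ s : Finset ℕ, Shatters H s → s.card ≤ d

/-- `H` has finite VC dimension. -/
def FiniteVCDim (H : Set Hyp) : Prop := ∃ d, VCDimAtMost H d

/-- `w` is a `k`-witness of VC dimension for `H`: on every increasing `(k+1)`-tuple it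
produces a Boolean `(k+1)`-tuple which is not the trace of any `h ∈ H` on the tuple. -/
def IsKWitness (k : ℕ) (w : List ℕ → List Bool) (H : Set Hyp) : Prop :=
  ∀ xs : List ℕ, xs.length = k + 1 → xs.Chain' (· < ·) →
    (w xs).length = k + 1 ∧ ∀ h ∈ H, xs.map h ≠ w xs

/-- The support of a hypothesis: `h⁻¹(1)`. -/
def hypSupport (h : Hyp) : Set ℕ := {x | h x = true}

/-- `h` is finitely supported. -/
def FinitelySupported (h : Hyp) : Prop := (hypSupport h).Finite

/-- The finitely supported hypothesis with support (the set of elements of) `l`. -/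
def listIndicator (l : List ℕ) : Hyp := fun x => decide (x ∈ l)

/-- A class of finitely supported hypotheses is decidable: there is an algorithm that,
given the support of a finitely supported `h` (as a list), decides whether `h ∈ H`. -/
def DecidableClass (H : Set Hyp) : Prop :=
  ∃ d : List ℕ → Bool, Computable d ∧ ∀ l : List ℕ, (d l = true ↔ listIndicator l ∈ H)

/-- `H` shatters the full binary tree of depth `d` whose node at binary path `p`
(with `|p| < d`) is labeled `t p`: every leaf (a binary path of length `d`) is reached
by some `h ∈ H`, going right at a node labeled `x` iff `h x = 1`. -/
def ShattersTree (H : Set Hyp) (d : ℕ) (t : List Bool → ℕ) : Prop :=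
  ∀ l : List Bool, l.length = d →
    ∃ h ∈ H, ∀ (i : ℕ) (hi : i < l.length), l[i] = h (t (l.take i))

/-! ### The class `𝓗_f` -/

/-- The `j`-th smallest element of the `k`-th block `I_k` of positive even numbers
(`1 ≤ j ≤ k`): `n_{kj} = k(k-1) + 2j`. -/
def nkj (k j : ℕ) : ℕ := k * (k - 1) + 2 * j

/-- The block `I_k` (of size `k`). -/
def Iblk (k : ℕ) : Finset ℕ := (Finset.Icc 1 k).image (nkj k)

/-- `h_{kj}`: the indicator of `I_k \ {n_{kj}}`. -/
def hkj (k j : ℕ) : Hyp := fun n => decide (n ∈ Iblk k ∧ n ≠ nkj k j)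

/-- `h_a`: the indicator of `I_{f(a)} ∪ {2a+1}`. -/
def hA (f : ℕ → ℕ) (a : ℕ) : Hyp := fun n => decide (n ∈ Iblk (f a) ∨ n = 2 * a + 1)

/-- The class `𝓗_f = {h_{kj} : 1 ≤ j ≤ k} ∪ {h_a : a ∈ ℕ}`. -/
def Hf (f : ℕ → ℕ) : Set Hyp :=
  {h | ∃ k j, 1 ≤ j ∧ j ≤ k ∧ h = hkj k j} ∪ {h | ∃ a, h = hA f a}

/-! ### Good hypotheses w.r.t. a witness -/

/-- `h` is good w.r.t. the `k`-witness `w`: it has finite support and disagrees with `w`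
on every increasing `(k+1)`-tuple lying strictly below `max supp(h)`. -/
def IsGood (k : ℕ) (w : List ℕ → List Bool) (h : Hyp) : Prop :=
  FinitelySupported h ∧
  ∀ xs : List ℕ, xs.length = k + 1 → xs.Chain' (· < ·) →
    (∀ x ∈ xs, x < sSup (hypSupport h)) → xs.map h ≠ w xs

/-- The set of good hypotheses w.r.t. `w`. -/
def Hgood (k : ℕ) (w : List ℕ → List Bool) : Set Hyp := {h | IsGood k w h}

namespace Computable

variable {α β σ : Type*} [Primcodable α] [Primcodable β] [Primcodable σ]

theorem list_foldl {f : α → List β} {g : α → σ} {h : α → σ × β → σ}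
    (hf : Computable f) (hg : Computable g) (hh : Computable₂ h) :
    Computable fun a => (f a).foldl (fun s b => h a (s, b)) (g a) := by
  -- fold over the first `n` entries by recursion on `n`, reading entry `n` with `getElem?`
  let step : α → ℕ × σ → σ := fun a p => ((f a)[p.1]?).elim p.2 fun b => h a (p.2, b)
  have hstep : Computable₂ step := Computable₂.mk <|
    option_casesOn (list_getElem?.comp (hf.comp fst) (fst.comp snd)) (snd.comp snd)
      (hh.comp (fst.comp fst) (pair (snd.comp (snd.comp fst)) snd)).to₂ |>.of_eq fun q => by
      simp only [step]; cases (f q.1)[q.2.1]? <;> rfl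
  have hprefix : ∀ a n, Nat.rec (motive := fun _ => σ) (g a) (fun n s => step a (n, s)) n =
      ((f a).take n).foldl (fun s b => h a (s, b)) (g a) := by
    intro a n
    induction n with
    | zero => simp
    | succ n ih =>
      rw [List.take_add_one]
      cases hx : (f a)[n]? <;> simp [step, ih, hx, List.foldl_append]
  exact (nat_rec (list_length.comp hf) hg hstep).of_eq fun a => by
    rw [hprefix, List.take_length]

theorem list_foldr {f : α → List β} {g : α → σ} {h : α → β × σ → σ}
    (hf : Computable f) (hg : Computable g) (hh : Computable₂ h) :
    Computable fun a => (f a).foldr (fun b s => h a (b, s)) (g a) :=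
  (list_foldl (list_reverse.comp hf) hg
    (hh.comp fst (pair (snd.comp snd) (fst.comp snd))).to₂).of_eq fun a => by
    simp [List.foldl_reverse]

theorem list_filter {f : α → List β} {p : α → β → Bool}
    (hf : Computable f) (hp : Computable₂ p) :
    Computable fun a => (f a).filter (p a) :=
  (list_foldr (h := fun a q => bif p a q.1 then q.1 :: q.2 else q.2) hf (const [])
    (cond (hp.comp fst (fst.comp snd)) (list_cons.comp (fst.comp snd) (snd.comp snd))
      (snd.comp snd)).to₂).of_eq fun a => by
    induction f a with
    | nil => rfl
    | cons b t ih => cases hb : p a b <;> simp [hb, ih]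

theorem list_all {f : α → List β} {p : α → β → Bool}
    (hf : Computable f) (hp : Computable₂ p) :
    Computable fun a => (f a).all (p a) :=
  (list_foldr (h := fun a q => p a q.1 && q.2) hf (const true)
    ((Primrec.and.to_comp.comp (hp.comp fst (fst.comp snd)) (snd.comp snd))).to₂).of_eq
    fun a => by induction f a <;> simp [*]

theorem list_argmin {f : α → List β} {c : α → β → ℕ}
    (hf : Computable f) (hc : Computable₂ c) : Computable fun a => (f a).argmin (c a) := by
  refine (list_foldl (h := fun a q => List.argAux (fun b b' => c a b < c a b') q.1 q.2) hf
    (const none) ?_).of_eq fun a => rfl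
  refine Computable₂.mk ((option_casesOn (fst.comp snd) (option_some.comp (snd.comp snd))
    (cond (Primrec.nat_lt.decide.to_comp.comp
        (hc.comp (fst.comp fst) (snd.comp (snd.comp fst))) (hc.comp (fst.comp fst) snd))
      (option_some.comp (snd.comp (snd.comp fst))) (option_some.comp snd)).to₂).of_eq
    fun q => ?_)
  rcases q with ⟨a, o, b⟩
  cases o <;> simp [List.argAux, Bool.cond_decide]

end Computable

theorem Primrec.list_sublists {α : Type*} [Primcodable α] : Primrec (@List.sublists α) :=
  list_foldr .id (const [[]]) (list_flatMap (snd.comp snd)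
    (list_cons.comp snd (list_cons.comp (list_cons.comp (fst.comp (snd.comp fst)) snd)
      (const []))).to₂).to₂

theorem Primrec.list_sum : Primrec (List.sum : List ℕ → ℕ) :=
  (list_foldr .id (const 0) (nat_add.comp (fst.comp snd) (snd.comp snd)).to₂).of_eq
    fun l => by induction l <;> simp_all

theorem List.sublist_range_iff {xs : List ℕ} {n : ℕ} :
    xs.Sublist (List.range n) ↔ xs.Pairwise (· < ·) ∧ ∀ x ∈ xs, x < n := by
  refine ⟨fun h => ⟨List.pairwise_lt_range.sublist h,
    fun x hx => List.mem_range.1 (h.subset hx)⟩, fun ⟨hxs, hlt⟩ => ?_⟩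
  have hsub : xs.Subperm (List.range n) :=
    List.Nodup.subperm (hxs.imp ne_of_lt) fun x hx => List.mem_range.2 (hlt x hx)
  exact List.sublist_of_subperm_of_pairwise hsub (hxs.imp le_of_lt)
    (List.pairwise_lt_range.imp le_of_lt)

def mistakes (S : Sample) (h : Hyp) : ℕ := S.countP fun p => h p.1 != p.2

theorem empError_le_empError_of_mistakes_le {S : Sample} {g h : Hyp}
    (hgh : mistakes S g ≤ mistakes S h) : empError S g ≤ empError S h :=
  ENNReal.div_le_div_right (by exact_mod_cast hgh) _

theorem mistakes_congr {S : Sample} {g h : Hyp} (hgh : ∀ p ∈ S, g p.1 = h p.1) :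
    mistakes S g = mistakes S h :=
  List.countP_congr fun p hp => by rw [hgh p hp]

theorem finitelySupported_of_forall_le {h : Hyp} {N : ℕ} (hN : ∀ x, h x = true → x ≤ N) :
    FinitelySupported h :=
  (Set.finite_Iic N).subset hN

def markedTruncation (h : Hyp) (M : ℕ) : Hyp := fun x =>
  if x ≤ M then h x else decide (x = M + 1)

theorem le_of_markedTruncation_eq_true {h : Hyp} {M x : ℕ} (hx : markedTruncation h M x = true) :
    x ≤ M + 1 := by
  unfold markedTruncation at hx
  split_ifs at hx with hxM
  · omega
  · simp_all

theorem sSup_hypSupport_markedTruncation (h : Hyp) (M : ℕ) :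
    sSup (hypSupport (markedTruncation h M)) = M + 1 :=
  IsGreatest.csSup_eq
    ⟨by simp [hypSupport, markedTruncation], fun _ => le_of_markedTruncation_eq_true⟩

theorem isGood_markedTruncation {k : ℕ} {w : List ℕ → List Bool} {h : Hyp} {M : ℕ}
    (havoid : ∀ xs : List ℕ, xs.length = k + 1 → xs.IsChain (· < ·) →
      (∀ x ∈ xs, x ≤ M) → xs.map h ≠ w xs) :
    IsGood k w (markedTruncation h M) := by
  refine ⟨finitelySupported_of_forall_le fun _ => le_of_markedTruncation_eq_true,
    fun xs hlen hchain hlt => ?_⟩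
  rw [sSup_hypSupport_markedTruncation] at hlt
  have hle : ∀ x ∈ xs, x ≤ M := fun x hx => Nat.le_of_lt_succ (hlt x hx)
  have hagree : xs.map (markedTruncation h M) = xs.map h :=
    List.map_congr_left fun x hx => if_pos (hle x hx)
  rw [hagree]
  exact havoid xs hlen hchain hle

theorem exists_mem_Hgood_eqOn {H : Set Hyp} {k : ℕ} {w : List ℕ → List Bool}
    (hwit : IsKWitness k w H) {h : Hyp} (hh : h ∈ H ∪ Hgood k w) (M : ℕ) :
    ∃ g ∈ Hgood k w, (∀ x, g x = true → x ≤ M + 1) ∧ ∀ x ≤ M, g x = h x := by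
  by_cases hsmall : h ∈ Hgood k w ∧ sSup (hypSupport h) ≤ M
  · obtain ⟨hgood, hle⟩ := hsmall
    exact ⟨h, hgood, fun x hx => (le_csSup hgood.1.bddAbove hx).trans (hle.trans M.le_succ),
      fun _ _ => rfl⟩
  refine ⟨markedTruncation h M, isGood_markedTruncation fun xs hlen hchain hle => ?_,
    fun _ => le_of_markedTruncation_eq_true, fun x hx => if_pos hx⟩
  rcases hh with hH | hgood
  · exact (hwit xs hlen hchain).2 h hH
  · exact hgood.2 xs hlen hchain fun x hx =>
      (hle x hx).trans_lt (not_le.1 fun hsup => hsmall ⟨hgood, hsup⟩)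

theorem lt_sSup_hypSupport_listIndicator_iff {l : List ℕ} {x : ℕ} :
    x < sSup (hypSupport (listIndicator l)) ↔ ∃ y ∈ l, x < y := by
  have hsupp : hypSupport (listIndicator l) = {y | y ∈ l} := by
    ext; simp [hypSupport, listIndicator]
  rw [hsupp]
  rcases eq_or_ne l [] with rfl | hl
  · simp
  · exact lt_csSup_iff l.finite_toSet.bddAbove (List.exists_mem_of_ne_nil l hl)

theorem listIndicator_filter_range {g : Hyp} {n : ℕ} (hg : ∀ x, g x = true → x < n) :
    listIndicator ((List.range n).filter g) = g := by
  funext x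
  by_cases hx : g x = true
  · simp [listIndicator, hx, hg x hx]
  · simp [listIndicator, hx]

def increasingTuples (k n : ℕ) : List (List ℕ) :=
  (List.range n).sublists.filter fun xs => xs.length = k + 1

theorem mem_increasingTuples {k n : ℕ} {xs : List ℕ} :
    xs ∈ increasingTuples k n ↔
      xs.length = k + 1 ∧ xs.IsChain (· < ·) ∧ ∀ x ∈ xs, x < n := by
  simp only [increasingTuples, List.mem_filter, List.mem_sublists, List.sublist_range_iff,
    decide_eq_true_eq, List.isChain_iff_pairwise]
  tauto

/-- `l.sum` only serves as an upper bound for `max l`. -/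
def relevantTuples (k : ℕ) (l : List ℕ) : List (List ℕ) :=
  (increasingTuples k l.sum).filter fun xs => ∀ x ∈ xs, ∃ y ∈ l, x < y

theorem mem_relevantTuples {k : ℕ} {l xs : List ℕ} :
    xs ∈ relevantTuples k l ↔ xs.length = k + 1 ∧ xs.IsChain (· < ·) ∧
      ∀ x ∈ xs, x < sSup (hypSupport (listIndicator l)) := by
  simp only [relevantTuples, List.mem_filter, mem_increasingTuples, decide_eq_true_eq,
    lt_sSup_hypSupport_listIndicator_iff]
  constructor
  · rintro ⟨⟨hlen, hchain, -⟩, hbelow⟩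
    exact ⟨hlen, hchain, hbelow⟩
  · rintro ⟨hlen, hchain, hbelow⟩
    refine ⟨⟨hlen, hchain, fun x hx => ?_⟩, hbelow⟩
    obtain ⟨y, hy, hxy⟩ := hbelow x hx
    exact hxy.trans_le (List.le_sum_of_mem hy)

def goodCheck (k : ℕ) (w : List ℕ → List Bool) (l : List ℕ) : Bool :=
  decide (∀ xs ∈ relevantTuples k l, xs.map (listIndicator l) ≠ w xs)

theorem goodCheck_eq_true_iff {k : ℕ} {w : List ℕ → List Bool} {l : List ℕ} :
    goodCheck k w l = true ↔ listIndicator l ∈ Hgood k w := by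
  have hfin : FinitelySupported (listIndicator l) :=
    finitelySupported_of_forall_le fun x hx =>
      List.le_sum_of_mem (by simpa [listIndicator] using hx)
  simp only [goodCheck, decide_eq_true_eq, mem_relevantTuples, Hgood, IsGood,
    Set.mem_ofPred_eq]
  exact ⟨fun hall => ⟨hfin, fun xs hlen hchain hlt => hall xs ⟨hlen, hchain, hlt⟩⟩,
    fun ⟨_, hall⟩ xs ⟨hlen, hchain, hlt⟩ => hall xs hlen hchain hlt⟩

theorem listIndicator_nil_mem_Hgood (k : ℕ) (w : List ℕ → List Bool) :
    listIndicator [] ∈ Hgood k w := by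
  refine goodCheck_eq_true_iff.1 (decide_eq_true fun xs hxs => ?_)
  obtain ⟨hlen, -, hlt⟩ := mem_relevantTuples.1 hxs
  obtain ⟨x, hx⟩ := List.exists_mem_of_length_pos (by omega : 0 < xs.length)
  simpa using lt_sSup_hypSupport_listIndicator_iff.1 (hlt x hx)

def sampleBound (S : Sample) : ℕ := (S.map Prod.fst).sum

theorem primrec_sampleBound : Primrec sampleBound :=
  Primrec.list_sum.comp (Primrec.list_map .id (Primrec.fst.comp .snd).to₂)

theorem le_sampleBound {S : Sample} {p : ℕ × Bool} (hp : p ∈ S) : p.1 ≤ sampleBound S :=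
  List.le_sum_of_mem (List.mem_map_of_mem hp)

def goodSupports (k : ℕ) (w : List ℕ → List Bool) (S : Sample) : List (List ℕ) :=
  (List.range (sampleBound S + 2)).sublists.filter (goodCheck k w)

def ermLearner (k : ℕ) (w : List ℕ → List Bool) : Learner := fun S =>
  listIndicator (((goodSupports k w S).argmin fun l => mistakes S (listIndicator l)).getD [])

theorem filter_range_mem_goodSupports {k : ℕ} {w : List ℕ → List Bool} {S : Sample} {g : Hyp}
    (hg : g ∈ Hgood k w) (hsupp : ∀ x, g x = true → x ≤ sampleBound S + 1) :
    (List.range (sampleBound S + 2)).filter g ∈ goodSupports k w S := by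
  refine List.mem_filter.2 ⟨List.mem_sublists.2 List.filter_sublist, goodCheck_eq_true_iff.2 ?_⟩
  rwa [listIndicator_filter_range fun x hx => Nat.lt_succ_of_le (hsupp x hx)]

theorem ermLearner_mem_Hgood (k : ℕ) (w : List ℕ → List Bool) (S : Sample) :
    ermLearner k w S ∈ Hgood k w := by
  unfold ermLearner
  cases hm : (goodSupports k w S).argmin fun l => mistakes S (listIndicator l) with
  | none => exact listIndicator_nil_mem_Hgood k w
  | some m => exact goodCheck_eq_true_iff.1 (List.mem_filter.1 (List.argmin_mem hm)).2

theorem isERM_ermLearner {H : Set Hyp} {k : ℕ} {w : List ℕ → List Bool}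
    (hwit : IsKWitness k w H) : IsERM (ermLearner k w) (H ∪ Hgood k w) := by
  refine fun S => ⟨Or.inr (ermLearner_mem_Hgood k w S), fun h hh => ?_⟩
  obtain ⟨g, hg, hsupp, hgh⟩ := exists_mem_Hgood_eqOn hwit hh (sampleBound S)
  have hcand := filter_range_mem_goodSupports hg hsupp
  obtain ⟨m, hm⟩ := Option.ne_none_iff_exists'.1 <|
    mt (List.argmin_eq_none (f := fun l => mistakes S (listIndicator l))).1
      (List.ne_nil_of_mem hcand)
  have hmin := List.not_lt_of_mem_argmin hcand hm
  rw [listIndicator_filter_range fun x hx => Nat.lt_succ_of_le (hsupp x hx),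
    mistakes_congr fun p hp => hgh p.1 (le_sampleBound hp)] at hmin
  apply empError_le_empError_of_mistakes_le
  simpa [ermLearner, hm] using hmin

theorem primrec₂_listIndicator : Primrec₂ listIndicator :=
  (PrimrecRel.exists_mem_list Primrec.eq).decide.of_eq fun l x => by simp [listIndicator]

theorem primrec_relevantTuples (k : ℕ) : Primrec (relevantTuples k) := by
  have hlen : PrimrecPred fun xs : List ℕ => xs.length = k + 1 :=
    Primrec.eq.comp Primrec.list_length (Primrec.const _)
  have hbelow : PrimrecRel fun (xs l : List ℕ) => ∀ x ∈ xs, ∃ y ∈ l, x < y :=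
    (PrimrecRel.exists_mem_list Primrec.nat_lt.swap).swap.forall_mem_list
  exact hbelow.listFilter.comp
    ((Primrec.listFilter hlen).comp (Primrec.list_sublists.comp
      (Primrec.list_range.comp Primrec.list_sum))) .id

theorem computable_goodCheck (k : ℕ) {w : List ℕ → List Bool} (hw : Computable w) :
    Computable (goodCheck k w) := by
  have hmap : Computable₂ fun (l xs : List ℕ) => xs.map (listIndicator l) :=
    (Primrec.list_map .snd
      (primrec₂_listIndicator.comp (Primrec.fst.comp .fst) .snd).to₂).to_comp
  exact (Computable.list_all (primrec_relevantTuples k).to_comp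
    (Primrec.not.to_comp.comp (Primrec.eq.decide.to_comp.comp hmap (hw.comp .snd))).to₂).of_eq
    fun l => by simp [goodCheck, List.decide_forall_mem]

theorem computable₂_mistakes_listIndicator :
    Computable₂ fun (S : Sample) (l : List ℕ) => mistakes S (listIndicator l) :=
  Computable₂.mk <| (Computable.list_length.comp (Computable.list_filter .fst
    ((Primrec.dom_bool₂ (· != ·)).comp (primrec₂_listIndicator.comp (Primrec.snd.comp .fst)
      (Primrec.fst.comp .snd)) (Primrec.snd.comp .snd)).to_comp.to₂)).of_eq
    fun _ => List.countP_eq_length_filter.symm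

theorem computableLearner_ermLearner (k : ℕ) {w : List ℕ → List Bool} (hw : Computable w) :
    ComputableLearner (ermLearner k w) := by
  have hsupports : Computable (goodSupports k w) :=
    Computable.list_filter (Primrec.list_sublists.comp (Primrec.list_range.comp
      (Primrec.nat_add.comp primrec_sampleBound (Primrec.const 2)))).to_comp
      ((computable_goodCheck k hw).comp .snd).to₂
  have hbest : Computable fun S => ((goodSupports k w S).argmin
      fun l => mistakes S (listIndicator l)).getD [] :=
    Computable.option_getD (Computable.list_argmin hsupports computable₂_mistakes_listIndicator)
      (Computable.const [])
  exact primrec₂_listIndicator.to_comp.comp (hbest.comp .fst) .snd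

/-- If `w` is a computable `k`-witness of VC dimension for `H`, then
the class `H ∪ 𝓗_good` has a computable ERM. -/
theorem union_good_has_computable_ERM (H : Set Hyp) (k : ℕ) (w : List ℕ → List Bool)
    (hcomp : Computable w) (hwit : IsKWitness k w H) :
    ∃ A : Learner, ComputableLearner A ∧ IsERM A (H ∪ Hgood k w) :=
  ⟨ermLearner k w, computableLearner_ermLearner k hcomp, isERM_ermLearner hwit⟩
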